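/- arXiv:2304.05007 — 2 statements merged into one kernel-verified Lean document; each statement's English description precedes it below -/
import Mathlib

section
/- Let Y be a countable type, p > 1 and q ≥ 1, and let μ⁰, μ¹, ν₂, …, ν_n be probability mass functions on Y. Assume: (i) μ⁰(y) ≤ p·μ¹(y) and μ¹(y) ≤ p·μ⁰(y) for all y ∈ Y; (ii) μ⁰(y) ≤ q·ν_i(y) and μ¹(y) ≤ q·ν_i(y) for all y ∈ Y and all i ∈ {2, …, n}; and (iii) β' := D₁(μ⁰‖μ¹) satisfies β' ≤ (p−1)/(p+1). Set α = β'/(p−1) and r = αp/q. Then there exist probability mass functions Q₁⁰, Q₁¹, Q₁, Q₂, …, Q_n on Y such that μ⁰ = pα·Q₁⁰ + α·Q₁¹ + (1−α−pα)·Q₁, μ¹ = α·Q₁⁰ + pα·Q₁¹ + (1−α−pα)·Q₁, and ν_i = r·Q₁⁰ + r·Q₁¹ + (1−2r)·Q_i for every i ∈ {2, …, n}. -/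
open scoped ENNReal
open Finset

noncomputable section

/-- Clamp a real number into an `ℝ≥0∞` probability (identity on `[0,1]`). -/
def prob (x : ℝ) : ℝ≥0∞ := min (ENNReal.ofReal x) 1

lemma prob_le_one (x : ℝ) : prob x ≤ 1 := min_le_right _ _

/-- Hockey-stick divergence `D_γ(P‖Q) = ∑_y max 0 (P y − γ·Q y)`. -/
def hsDiv {Y : Type*} (P Q : PMF Y) (γ : ℝ) : ℝ :=
  ∑' y, max 0 ((P y).toReal - γ * (Q y).toReal)

/-- The shuffle of a list of PMFs: sample independently and return the multiset of results. -/
def shuffle {Y : Type*} : List (PMF Y) → PMF (Multiset Y)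
  | [] => PMF.pure 0
  | μ :: μs => μ.bind fun y => (shuffle μs).map fun s => y ::ₘ s

/-- Binomial law on ℕ with `m` trials and success probability `θ` (a real, clamped). -/
def binomN (θ : ℝ) (m : ℕ) : PMF ℕ :=
  (PMF.binomial (prob θ).toNNReal
    ((ENNReal.toNNReal_mono ENNReal.one_ne_top (prob_le_one θ)).trans_eq ENNReal.toNNReal_one)
    m).map Fin.val

/-- Three-point distribution on `Fin 3` with weights `w1, w2, 1 − w1 − w2` (clamped). -/
def triR (w1 w2 : ℝ) : PMF (Fin 3) :=
  PMF.ofFintype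
    ![prob w1, min (prob w2) (1 - prob w1),
      1 - (prob w1 + min (prob w2) (1 - prob w1))]
    (by
      have h : prob w1 + min (prob w2) (1 - prob w1) ≤ 1 := by
        calc prob w1 + min (prob w2) (1 - prob w1)
            ≤ prob w1 + (1 - prob w1) := by gcongr; exact min_le_right _ _
          _ = 1 := add_tsub_cancel_of_le (prob_le_one w1)
      simp only [Fin.sum_univ_three, Matrix.cons_val_zero, Matrix.cons_val_one,
        Matrix.head_cons, Matrix.cons_val_two, Matrix.tail_cons]
      exact add_tsub_cancel_of_le h)

/-- Law of `(A+Δ₁, C−A+Δ₂)` where `C ~ Binomial(m, θC)`, `A ~ Binomial(C, θA)`, and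
`(Δ₁,Δ₂)` equals `(1,0)` w.p. `w1`, `(0,1)` w.p. `w2`, `(0,0)` otherwise. -/
def lawP (m : ℕ) (θC θA w1 w2 : ℝ) : PMF (ℕ × ℕ) :=
  (binomN θC m).bind fun c =>
    (binomN θA c).bind fun a =>
      (triR w1 w2).map fun d =>
        if d = 0 then (a + 1, c - a) else if d = 1 then (a, c - a + 1) else (a, c - a)

/-- Law of `(A+Δ₂, C−A+Δ₁)` for the same sampling process. -/
def lawQ (m : ℕ) (θC θA w1 w2 : ℝ) : PMF (ℕ × ℕ) :=
  (binomN θC m).bind fun c =>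
    (binomN θA c).bind fun a =>
      (triR w1 w2).map fun d =>
        if d = 0 then (a, c - a + 1) else if d = 1 then (a + 1, c - a) else (a, c - a)

/-- `P^q_{β,p}` with `n` users: `α = β/(p−1)`, `r = pα/q`, `C ~ Binomial(n−1, 2r)`,
`A ~ Binomial(C, 1/2)`. -/
def Pq (n : ℕ) (p β q : ℝ) : PMF (ℕ × ℕ) :=
  lawP (n - 1) (2 * (p * (β / (p - 1)) / q)) (1 / 2) (p * (β / (p - 1))) (β / (p - 1))

/-- `Q^q_{β,p}`. -/
def Qq (n : ℕ) (p β q : ℝ) : PMF (ℕ × ℕ) :=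
  lawQ (n - 1) (2 * (p * (β / (p - 1)) / q)) (1 / 2) (p * (β / (p - 1))) (β / (p - 1))

/-- `CDF_{c,θ}[c₁,c₂] = ∑_{c₁ ≤ i ≤ c₂, 0 ≤ i ≤ c} C(c,i) θ^i (1−θ)^{c−i}`. -/
def binCDF (c : ℕ) (θ : ℝ) (c1 c2 : ℝ) : ℝ :=
  ∑ i ∈ Finset.range (c + 1),
    if c1 ≤ (i : ℝ) ∧ (i : ℝ) ≤ c2 then (c.choose i : ℝ) * θ ^ i * (1 - θ) ^ (c - i) else 0

/-- Expectation of `f` under `Binomial(m, θ)`. -/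
def binExp (m : ℕ) (θ : ℝ) (f : ℕ → ℝ) : ℝ :=
  ∑ c ∈ Finset.range (m + 1), (m.choose c : ℝ) * θ ^ c * (1 - θ) ^ (m - c) * f c

/-- The `(p, β)`-variation property of the first randomizer. -/
def VariationProp {X Y : Type*} (R1 : X → PMF Y) (p β : ℝ) : Prop :=
  ∀ x x' : X, (∀ y, (R1 x y).toReal ≤ p * (R1 x' y).toReal) ∧ hsDiv (R1 x) (R1 x') 1 ≤ β

/-- The `q`-ratio property of the first randomizer w.r.t. the others. -/
def RatioProp {X Y : Type*} {m : ℕ} (R1 : X → PMF Y) (R : Fin m → X → PMF Y) (q : ℝ) : Prop :=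
  ∀ (i : Fin m) (x x' : X) (y : Y), (R1 x y).toReal ≤ q * (R i x' y).toReal


/-!
Take for `Q₁⁰` and `Q₁¹` the positive and negative parts of `μ⁰ − μ¹`, each of total mass
`β' = D₁(μ⁰‖μ¹) = (p − 1)α` and normalised by it. The ratio bounds `μ⁰ ≤ pμ¹`, `μ¹ ≤ pμ⁰` and
`μ⁰, μ¹ ≤ qνᵢ` ensure that subtracting the prescribed multiples of `Q₁⁰, Q₁¹` from `μ⁰` and
from `νᵢ` leaves nonnegative remainders, whose masses are then forced to be `1 − α − pα` and
`1 − 2r`; normalising them gives `Q₁` and `Qᵢ`. The remainders for `μ⁰` and `μ¹` coincide because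
`(p − 1)α(Q₁⁰ − Q₁¹) = μ⁰ − μ¹`.
-/

namespace PMF

variable {Y : Type*}

lemma hasSum_toReal (P : PMF Y) : HasSum (fun y => (P y).toReal) 1 := by
  have h := ENNReal.hasSum_toReal (f := P) (by simp [P.tsum_coe])
  rwa [← ENNReal.tsum_toReal_eq P.apply_ne_top, P.tsum_coe, ENNReal.toReal_one] at h

lemma hasSum_mul_toReal_add_mul_toReal (P Q : PMF Y) (a b : ℝ) :
    HasSum (fun y => a * (P y).toReal + b * (Q y).toReal) (a + b) := by
  simpa using (P.hasSum_toReal.mul_left a).add (Q.hasSum_toReal.mul_left b)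

lemma exists_mul_toReal_eq [Nonempty Y] {g : Y → ℝ} {c : ℝ} (hg : ∀ y, 0 ≤ g y)
    (hc : HasSum g c) : ∃ Q : PMF Y, ∀ y, c * (Q y).toReal = g y := by
  rcases (hc.nonneg hg).eq_or_lt with rfl | hc0
  · refine ⟨PMF.pure (Classical.arbitrary Y), fun y => ?_⟩
    simp [(hasSum_zero_iff_of_nonneg hg).1 hc]
  · have hsum : ∑' y, ENNReal.ofReal (g y / c) = 1 := by
      rw [← ENNReal.ofReal_tsum_of_nonneg (fun y => div_nonneg (hg y) hc0.le)
        (hc.div_const c).summable, (hc.div_const c).tsum_eq, div_self hc0.ne', ENNReal.ofReal_one]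
    refine ⟨⟨fun y => ENNReal.ofReal (g y / c), hsum ▸ ENNReal.summable.hasSum⟩, fun y => ?_⟩
    change c * (ENNReal.ofReal (g y / c)).toReal = g y
    rw [ENNReal.toReal_ofReal (div_nonneg (hg y) hc0.le)]
    field_simp

lemma exists_toReal_eq_add_mul (P : PMF Y) {h : Y → ℝ} {s : ℝ} (hs : HasSum h s)
    (hle : ∀ y, h y ≤ (P y).toReal) :
    ∃ Q : PMF Y, ∀ y, (P y).toReal = h y + (1 - s) * (Q y).toReal := by
  have : Nonempty Y := ⟨P.support_nonempty.some⟩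
  obtain ⟨Q, hQ⟩ := exists_mul_toReal_eq (fun y => sub_nonneg.2 (hle y))
    (P.hasSum_toReal.sub hs)
  exact ⟨Q, fun y => by rw [hQ y]; ring⟩

end PMF

section HockeyStick

variable {Y : Type*}

lemma hasSum_max_zero_sub (P Q : PMF Y) :
    HasSum (fun y => max 0 ((P y).toReal - (Q y).toReal)) (hsDiv P Q 1) := by
  have hsum : Summable fun y => max 0 ((P y).toReal - (Q y).toReal) :=
    P.hasSum_toReal.summable.of_nonneg_of_le (fun _ => le_max_left _ _)
      (fun _ => max_le ENNReal.toReal_nonneg (sub_le_self _ ENNReal.toReal_nonneg))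
  simpa only [hsDiv, one_mul] using hsum.hasSum

lemma hsDiv_one_comm (P Q : PMF Y) : hsDiv P Q 1 = hsDiv Q P 1 := by
  have hdiff : ∀ a b : ℝ, max 0 (a - b) - max 0 (b - a) = a - b := by
    intro a b
    rcases le_total a b with h | h
    · rw [max_eq_left (by linarith), max_eq_right (by linarith)]; ring
    · rw [max_eq_right (by linarith), max_eq_left (by linarith)]; ring
  have h := (hasSum_max_zero_sub P Q).sub (hasSum_max_zero_sub Q P)
  simp only [hdiff] at h
  linarith [h.unique (P.hasSum_toReal.sub Q.hasSum_toReal)]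

lemma exists_hsDiv_mul_toReal_eq (P Q : PMF Y) :
    ∃ R : PMF Y, ∀ y, hsDiv P Q 1 * (R y).toReal = max 0 ((P y).toReal - (Q y).toReal) :=
  have : Nonempty Y := ⟨P.support_nonempty.some⟩
  PMF.exists_mul_toReal_eq (fun _ => le_max_left _ _) (hasSum_max_zero_sub P Q)

end HockeyStick

section RatioBounds

variable {p x y a b : ℝ}

lemma sub_mul_add_eq_sub_add_mul (ha : (p - 1) * a = max 0 (x - y))
    (hb : (p - 1) * b = max 0 (y - x)) : x - (p * a + b) = y - (a + p * b) := by
  have : (p - 1) * a - (p - 1) * b = x - y := by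
    rcases le_total x y with h | h
    · rw [ha, hb, max_eq_left (by linarith), max_eq_right (by linarith)]; ring
    · rw [ha, hb, max_eq_right (by linarith), max_eq_left (by linarith)]; ring
  linarith

lemma mul_add_le_of_le_mul (hp : 1 < p) (hxy : x ≤ p * y) (hyx : y ≤ p * x)
    (ha : (p - 1) * a = max 0 (x - y)) (hb : (p - 1) * b = max 0 (y - x)) :
    p * a + b ≤ x := by
  have hp1 : 0 < p - 1 := sub_pos.2 hp
  refine le_of_mul_le_mul_left ?_ hp1
  have : (p - 1) * (p * a + b) = p * max 0 (x - y) + max 0 (y - x) := by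
    rw [← ha, ← hb]; ring
  rw [this]
  rcases le_total x y with h | h
  · rw [max_eq_left (by linarith), max_eq_right (by linarith)]; linarith
  · rw [max_eq_right (by linarith), max_eq_left (by linarith)]; linarith

lemma mul_add_le_max (hp : 1 < p) (hxy : x ≤ p * y) (hyx : y ≤ p * x)
    (ha : (p - 1) * a = max 0 (x - y)) (hb : (p - 1) * b = max 0 (y - x)) :
    p * (a + b) ≤ max x y := by
  have hp1 : 0 < p - 1 := sub_pos.2 hp
  refine le_of_mul_le_mul_left ?_ hp1
  have : (p - 1) * (p * (a + b)) = p * (max 0 (x - y) + max 0 (y - x)) := by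
    rw [← ha, ← hb]; ring
  rw [this]
  rcases le_total x y with h | h
  · rw [max_eq_left (by linarith), max_eq_right (by linarith), max_eq_right h]; linarith
  · rw [max_eq_right (by linarith), max_eq_left (by linarith), max_eq_left h]; linarith

end RatioBounds

theorem stmt2_general {Y : Type*} (n : ℕ) (p q : ℝ) (hp : 1 < p)
    (hq : 1 ≤ q) (μ0 μ1 : PMF Y) (ν : Fin (n - 1) → PMF Y)
    (hvar0 : ∀ y, (μ0 y).toReal ≤ p * (μ1 y).toReal)
    (hvar1 : ∀ y, (μ1 y).toReal ≤ p * (μ0 y).toReal)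
    (hq0 : ∀ i y, (μ0 y).toReal ≤ q * (ν i y).toReal)
    (hq1 : ∀ i y, (μ1 y).toReal ≤ q * (ν i y).toReal)
    (β' α r : ℝ) (hβ' : β' = hsDiv μ0 μ1 1)
    (hα : α = β' / (p - 1)) (hr : r = α * p / q) :
    ∃ (Q10 Q11 Q1 : PMF Y) (Qi : Fin (n - 1) → PMF Y),
      (∀ y, (μ0 y).toReal =
          p * α * (Q10 y).toReal + α * (Q11 y).toReal + (1 - α - p * α) * (Q1 y).toReal) ∧
      (∀ y, (μ1 y).toReal =
          α * (Q10 y).toReal + p * α * (Q11 y).toReal + (1 - α - p * α) * (Q1 y).toReal) ∧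
      (∀ i y, (ν i y).toReal =
          r * (Q10 y).toReal + r * (Q11 y).toReal + (1 - 2 * r) * (Qi i y).toReal) := by
  have hpα : (p - 1) * α = β' := by rw [hα]; field_simp [(sub_pos.2 hp).ne']
  obtain ⟨Q10, hQ10⟩ := exists_hsDiv_mul_toReal_eq μ0 μ1
  obtain ⟨Q11, hQ11⟩ := exists_hsDiv_mul_toReal_eq μ1 μ0
  rw [hsDiv_one_comm, ← hβ', ← hpα] at hQ11
  rw [← hβ', ← hpα] at hQ10
  simp only [mul_assoc] at hQ10 hQ11
  obtain ⟨Q1, hQ1⟩ := μ0.exists_toReal_eq_add_mul (Q10.hasSum_mul_toReal_add_mul_toReal Q11 _ _)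
    fun y => by
      rw [mul_assoc]; exact mul_add_le_of_le_mul hp (hvar0 y) (hvar1 y) (hQ10 y) (hQ11 y)
  have hq_pos : 0 < q := by linarith
  have hQi : ∀ i, ∃ Q : PMF Y, ∀ y, (ν i y).toReal =
      r * (Q10 y).toReal + r * (Q11 y).toReal + (1 - (r + r)) * (Q y).toReal := fun i =>
    (ν i).exists_toReal_eq_add_mul (Q10.hasSum_mul_toReal_add_mul_toReal Q11 _ _) fun y => by
      calc r * (Q10 y).toReal + r * (Q11 y).toReal
          = p * (α * (Q10 y).toReal + α * (Q11 y).toReal) / q := by rw [hr]; ring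
        _ ≤ (ν i y).toReal := by
          rw [div_le_iff₀' hq_pos]
          exact (mul_add_le_max hp (hvar0 y) (hvar1 y) (hQ10 y) (hQ11 y)).trans
            (max_le (hq0 i y) (hq1 i y))
  choose Qi hQi using hQi
  refine ⟨Q10, Q11, Q1, Qi, fun y => ?_, fun y => ?_, fun i y => ?_⟩
  · rw [hQ1 y]; ring
  · linear_combination hQ1 y - sub_mul_add_eq_sub_add_mul (hQ10 y) (hQ11 y)
  · rw [hQi i y]; ring

theorem stmt2 {Y : Type*} [Countable Y] (n : ℕ) (hn : 1 ≤ n) (p q : ℝ) (hp : 1 < p)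
    (hq : 1 ≤ q) (μ0 μ1 : PMF Y) (ν : Fin (n - 1) → PMF Y)
    (hvar0 : ∀ y, (μ0 y).toReal ≤ p * (μ1 y).toReal)
    (hvar1 : ∀ y, (μ1 y).toReal ≤ p * (μ0 y).toReal)
    (hq0 : ∀ i y, (μ0 y).toReal ≤ q * (ν i y).toReal)
    (hq1 : ∀ i y, (μ1 y).toReal ≤ q * (ν i y).toReal)
    (β' α r : ℝ) (hβ' : β' = hsDiv μ0 μ1 1) (hβle : β' ≤ (p - 1) / (p + 1))
    (hα : α = β' / (p - 1)) (hr : r = α * p / q) :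
    ∃ (Q10 Q11 Q1 : PMF Y) (Qi : Fin (n - 1) → PMF Y),
      (∀ y, (μ0 y).toReal =
          p * α * (Q10 y).toReal + α * (Q11 y).toReal + (1 - α - p * α) * (Q1 y).toReal) ∧
      (∀ y, (μ1 y).toReal =
          α * (Q10 y).toReal + p * α * (Q11 y).toReal + (1 - α - p * α) * (Q1 y).toReal) ∧
      (∀ i y, (ν i y).toReal =
          r * (Q10 y).toReal + r * (Q11 y).toReal + (1 - 2 * r) * (Qi i y).toReal) :=
  stmt2_general n p q hp hq μ0 μ1 ν hvar0 hvar1 hq0 hq1 β' α r hβ' hα hr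
end
end

section
/- Let n ≥ 1 be an integer, p > 1, β ∈ (0, (p−1)/(p+1)], q ≥ 1, and set α = β/(p−1), r = pα/q, assuming r < 1/2. Then for every ε ∈ ℝ: (1) D_{e^ε}(P^q_{β,p} ‖ Q^q_{β,p}) = E_{c ~ Binomial(n−1, 2r)}[ (p − e^ε)·α·CDF_{c,1/2}[⌈low_{c+1} − 1⌉, c] + (1 − p·e^ε)·α·CDF_{c,1/2}[⌈low_{c+1}⌉, c] + (1 − e^ε)·(1 − α − pα)·CDF_{c,1/2}[⌈low_c⌉, c] ]; and (2) D_{e^ε}(Q^q_{β,p} ‖ P^q_{β,p}) = E_{c ~ Binomial(n−1, 2r)}[ (1 − p·e^ε)·α·CDF_{c,1/2}[0, ⌊high_{c+1} − 1⌋] + (p − e^ε)·α·CDF_{c,1/2}[0, ⌊high_{c+1}⌋] + (1 − e^ε)·(1 − α − pα)·CDF_{c,1/2}[0, ⌊high_c⌋] ]; where low_c = ((e^ε·p − 1)·α·c + (e^ε − 1)·(1 − α − αp)·(n − c)·r/(1 − 2r)) / (α·(e^ε + 1)·(p − 1)) and high_c = ((e^{−ε}·p − 1)·α·c + (e^{−ε}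 − 1)·(1 − α − αp)·(n − c)·r/(1 − 2r)) / (α·(e^{−ε} + 1)·(p − 1)). -/
open scoped ENNReal
open Finset

noncomputable section

/-- `low_c` threshold function (symmetric case). -/
def lowf (n : ℕ) (p α r ε : ℝ) (c : ℝ) : ℝ :=
  ((Real.exp ε * p - 1) * α * c +
      (Real.exp ε - 1) * (1 - α - α * p) * ((n : ℝ) - c) * (r / (1 - 2 * r))) /
    (α * (Real.exp ε + 1) * (p - 1))

/-- `high_c` threshold function (symmetric case). -/
def highf (n : ℕ) (p α r ε : ℝ) (c : ℝ) : ℝ :=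
  ((Real.exp (-ε) * p - 1) * α * c +
      (Real.exp (-ε) - 1) * (1 - α - α * p) * ((n : ℝ) - c) * (r / (1 - 2 * r))) /
    (α * (Real.exp (-ε) + 1) * (p - 1))


/-!
The pair `(A, C − A)` is trinomial with `n − 1` trials and cell probabilities `r, r, 1 − 2r`,
and `P^q_{β,p}(x, y)` mixes its masses at `(x − 1, y)`, `(x, y − 1)` and `(x, y)` with weights
`pα`, `α`, `1 − α − pα`. These three masses are `x`, `y` and `(n − x − y)·r/(1 − 2r)` times
the trinomial mass `N(x, y)` with `n` trials, up to the common factor `1/(n r)`. Since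
`Q^q_{β,p}` only swaps the weights `pα` and `α`, `P(x, y) − e^ε Q(x, y)` is `N(x, y)` times a
positive constant times `x − low_{x+y}`. So the hockey-stick divergence is `P(E) − e^ε Q(E)` for
the event `E = {x ≥ low_{x+y}}`, and following the sampling process (first `C`, then `A`, then
the shift) turns `P(E)` and `Q(E)` into expectations of binomial CDFs. The reverse divergence is
the same argument with the event `{x ≤ high_{x+y}}`.
-/

theorem PMF.toOuterMeasure_ne_top {β : Type*} (P : PMF β) (E : Set β) :
    P.toOuterMeasure E ≠ ⊤ :=
  ne_top_of_le_ne_top ENNReal.one_ne_top <| by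
    rw [PMF.toOuterMeasure_apply, ← P.tsum_coe]
    exact ENNReal.tsum_le_tsum (Set.indicator_le_self E P)

theorem hsDiv_eq_of_sign {Y : Type*} (P Q : PMF Y) (γ : ℝ) (g : Y → ℝ)
    (hg : ∀ y, ∃ κ ≥ 0, (P y).toReal - γ * (Q y).toReal = κ * g y) :
    hsDiv P Q γ = (P.toOuterMeasure {y | 0 ≤ g y}).toReal -
      γ * (Q.toOuterMeasure {y | 0 ≤ g y}).toReal := by
  set E := {y | 0 ≤ g y}
  have hmax (y : Y) : max 0 ((P y).toReal - γ * (Q y).toReal) =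
      E.indicator (fun y => (P y).toReal) y - γ * E.indicator (fun y => (Q y).toReal) y := by
    obtain ⟨κ, hκ, h⟩ := hg y
    by_cases hy : y ∈ E
    · rw [Set.indicator_of_mem hy, Set.indicator_of_mem hy, h]
      exact max_eq_right (mul_nonneg hκ hy)
    · rw [Set.indicator_of_notMem hy, Set.indicator_of_notMem hy, h, mul_zero, sub_zero]
      exact max_eq_left (mul_nonpos_of_nonneg_of_nonpos hκ (le_of_lt (not_le.1 hy)))
  have hsummable (R : PMF Y) : Summable (E.indicator fun y => (R y).toReal) :=
    (ENNReal.summable_toReal (R.tsum_coe ▸ ENNReal.one_ne_top)).indicator E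
  have htoReal (R : PMF Y) :
      (R.toOuterMeasure E).toReal = ∑' y, E.indicator (fun y => (R y).toReal) y := by
    rw [PMF.toOuterMeasure_apply, ENNReal.tsum_toReal_eq fun y =>
      ne_top_of_le_ne_top (R.apply_ne_top y) (Set.indicator_le_self E R y)]
    exact tsum_congr fun y => by by_cases hy : y ∈ E <;> simp [hy]
  rw [hsDiv, tsum_congr hmax, (hsummable P).tsum_sub ((hsummable Q).mul_left γ), tsum_mul_left,
    htoReal, htoReal]

def binomWeight (m : ℕ) (θ : ℝ) (c : ℕ) : ℝ := m.choose c * θ ^ c * (1 - θ) ^ (m - c)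

theorem binomWeight_eq_zero_of_lt {m c : ℕ} (h : m < c) (θ : ℝ) : binomWeight m θ c = 0 := by
  simp [binomWeight, Nat.choose_eq_zero_of_lt h]

theorem binExp_eq_sum (m : ℕ) (θ : ℝ) (f : ℕ → ℝ) :
    binExp m θ f = ∑ c ∈ range (m + 1), binomWeight m θ c * f c := rfl

section binExp

variable (m : ℕ) (θ : ℝ) (f g : ℕ → ℝ)

theorem binExp_add : (binExp m θ fun c => f c + g c) = binExp m θ f + binExp m θ g := by
  simp only [binExp_eq_sum, mul_add, Finset.sum_add_distrib]

theorem binExp_const_mul (k : ℝ) : (binExp m θ fun c => k * f c) = k * binExp m θ f := by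
  simp only [binExp_eq_sum, Finset.mul_sum]
  exact Finset.sum_congr rfl fun _ _ => by ring

end binExp

theorem binCDF_ceil_eq_binExp (c : ℕ) (θ z : ℝ) :
    binCDF c θ ⌈z⌉ c = binExp c θ fun a => if z ≤ a then 1 else 0 := by
  rw [binCDF, binExp_eq_sum]
  refine Finset.sum_congr rfl fun a ha => ?_
  have hac : (a : ℝ) ≤ c := by exact_mod_cast Nat.lt_succ_iff.1 (Finset.mem_range.1 ha)
  have hceil : ((⌈z⌉ : ℤ) : ℝ) ≤ a ↔ z ≤ a := by exact_mod_cast Int.ceil_le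
  simp only [hceil, hac, and_true, binomWeight, mul_ite, mul_one, mul_zero]

theorem binCDF_floor_eq_binExp (c : ℕ) (θ z : ℝ) :
    binCDF c θ 0 ⌊z⌋ = binExp c θ fun a => if a ≤ z then 1 else 0 := by
  rw [binCDF, binExp_eq_sum]
  refine Finset.sum_congr rfl fun a _ => ?_
  have hfloor : (a : ℝ) ≤ ((⌊z⌋ : ℤ) : ℝ) ↔ (a : ℝ) ≤ z := by
    exact_mod_cast Int.le_floor
  simp only [hfloor, Nat.cast_nonneg, true_and, binomWeight, mul_ite, mul_one, mul_zero]

def trinomialWeight (m : ℕ) (r : ℝ) (i j : ℕ) : ℝ :=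
  m.choose (i + j) * (i + j).choose i * r ^ (i + j) * (1 - 2 * r) ^ (m - (i + j))

section trinomial

variable (m : ℕ) (r : ℝ) (i j : ℕ)

theorem binomWeight_mul_binomWeight_half :
    binomWeight m (2 * r) (i + j) * binomWeight (i + j) (1 / 2) i = trinomialWeight m r i j := by
  simp only [binomWeight, trinomialWeight, Nat.add_sub_cancel_left]
  have half_pow (k : ℕ) : (2 * r) ^ k * (1 / 2 : ℝ) ^ k = r ^ k := by rw [← mul_pow]; ring_nf
  rw [show (1 : ℝ) - 1 / 2 = 1 / 2 by norm_num, ← half_pow, pow_add (1 / 2 : ℝ)]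
  ring

theorem trinomialWeight_comm : trinomialWeight m r i j = trinomialWeight m r j i := by
  rw [trinomialWeight, trinomialWeight, Nat.choose_symm_add, add_comm i j]

theorem trinomialWeight_mul_succ_left :
    trinomialWeight m r i j * ((m + 1) * r) = (i + 1) * trinomialWeight (m + 1) r (i + 1) j := by
  have hchoose : m.choose (i + j) * (i + j).choose i * (m + 1) =
      (m + 1).choose (i + j + 1) * (i + j + 1).choose (i + 1) * (i + 1) := by
    rw [mul_right_comm, mul_comm _ (m + 1), Nat.add_one_mul_choose_eq, mul_assoc,
      Nat.add_one_mul_choose_eq, mul_assoc]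
  replace hchoose := congrArg (Nat.cast : ℕ → ℝ) hchoose
  push_cast at hchoose
  simp only [trinomialWeight, show i + 1 + j = i + j + 1 by ring, Nat.add_sub_add_right]
  linear_combination (r ^ (i + j + 1) * (1 - 2 * r) ^ (m - (i + j))) * hchoose

theorem trinomialWeight_mul_succ_right :
    trinomialWeight m r i j * ((m + 1) * r) = (j + 1) * trinomialWeight (m + 1) r i (j + 1) := by
  rw [trinomialWeight_comm, trinomialWeight_mul_succ_left, trinomialWeight_comm]

theorem trinomialWeight_mul_one_sub_two_mul :
    trinomialWeight m r i j * ((m + 1) * (1 - 2 * r)) =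
      ((m + 1 : ℝ) - (i + j)) * trinomialWeight (m + 1) r i j := by
  rcases le_or_gt (i + j) m with hle | hlt
  · have hchoose : (m.choose (i + j) * (m + 1) : ℝ) =
        (m + 1).choose (i + j) * ((m + 1 : ℝ) - (i + j)) := by
      have h := congrArg (Nat.cast : ℕ → ℝ) (Nat.choose_mul_succ_eq m (i + j))
      push_cast [Nat.cast_sub (by omega : i + j ≤ m + 1)] at h
      exact h
    simp only [trinomialWeight, show m + 1 - (i + j) = m - (i + j) + 1 by omega, pow_succ]
    linear_combination
      ((i + j).choose i * r ^ (i + j) * (1 - 2 * r) ^ (m - (i + j)) * (1 - 2 * r)) * hchoose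
  · simp only [trinomialWeight, Nat.choose_eq_zero_of_lt hlt, Nat.cast_zero, zero_mul]
    rcases Nat.lt_or_eq_of_le hlt with hlt' | heq
    · simp [Nat.choose_eq_zero_of_lt hlt']
    · have hcast : (m + 1 : ℝ) = i + j := by exact_mod_cast heq
      rw [hcast, sub_self, zero_mul]

end trinomial

theorem trinomialWeight_nonneg {r : ℝ} (hr0 : 0 ≤ r) (hr1 : 2 * r ≤ 1) (m i j : ℕ) :
    0 ≤ trinomialWeight m r i j := by
  have : 0 ≤ 1 - 2 * r := by linarith
  unfold trinomialWeight
  positivity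

theorem prob_eq_ofReal {x : ℝ} (h : x ≤ 1) : prob x = ENNReal.ofReal x :=
  min_eq_left (ENNReal.ofReal_le_one.2 h)

theorem coe_toNNReal_prob {x : ℝ} (h0 : 0 ≤ x) (h1 : x ≤ 1) :
    ((prob x).toNNReal : ℝ) = x := by
  rw [prob_eq_ofReal h1, ENNReal.coe_toNNReal_eq_toReal, ENNReal.toReal_ofReal h0]

theorem toReal_toOuterMeasure_binomN_bind {β : Type*} {θ : ℝ} (h0 : 0 ≤ θ) (h1 : θ ≤ 1)
    (m : ℕ) (f : ℕ → PMF β) (E : Set β) :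
    (((binomN θ m).bind f).toOuterMeasure E).toReal =
      binExp m θ fun c => ((f c).toOuterMeasure E).toReal := by
  rw [binomN, PMF.bind_map, PMF.toOuterMeasure_bind_apply, tsum_fintype,
    ENNReal.toReal_sum fun i _ =>
      ENNReal.mul_ne_top (PMF.apply_ne_top _ _) (PMF.toOuterMeasure_ne_top _ _),
    binExp_eq_sum, ← Fin.sum_univ_eq_sum_range]
  refine Finset.sum_congr rfl fun i _ => ?_
  rw [ENNReal.toReal_mul]
  change ENNReal.toReal ((_ ^ (i : ℕ) * (1 - _) ^ ((Fin.last m : ℕ) - i) * _ : NNReal) : ℝ≥0∞) *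
    _ = _
  have hle : (prob θ).toNNReal ≤ 1 := by
    simpa using ENNReal.toNNReal_mono ENNReal.one_ne_top (prob_le_one θ)
  rw [ENNReal.coe_toReal]
  push_cast [NNReal.coe_sub hle, coe_toNNReal_prob h0 h1]
  simp only [binomWeight, Function.comp_apply]
  ring

theorem triR_apply_zero {w1 : ℝ} (w2 : ℝ) (h : w1 ≤ 1) : triR w1 w2 0 = ENNReal.ofReal w1 :=
  prob_eq_ofReal h

section triR

variable {w1 w2 : ℝ} (h1 : 0 ≤ w1) (h2 : 0 ≤ w2) (h12 : w1 + w2 ≤ 1)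
include h1 h2 h12

theorem triR_apply_one : triR w1 w2 1 = ENNReal.ofReal w2 := by
  change min (prob w2) (1 - prob w1) = _
  rw [prob_eq_ofReal (by linarith), prob_eq_ofReal (by linarith), ← ENNReal.ofReal_one,
    ← ENNReal.ofReal_sub _ h1]
  exact min_eq_left (ENNReal.ofReal_le_ofReal (by linarith))

theorem triR_apply_two : triR w1 w2 2 = ENNReal.ofReal (1 - w1 - w2) := by
  change 1 - (triR w1 w2 0 + triR w1 w2 1) = _
  rw [triR_apply_zero w2 (by linarith : w1 ≤ 1), triR_apply_one h1 h2 h12,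
    ← ENNReal.ofReal_add h1 h2, ← ENNReal.ofReal_one, ← ENNReal.ofReal_sub _ (by positivity),
    sub_sub]

theorem toOuterMeasure_triR_map {β : Type*} (g : Fin 3 → β) (E : Set β) :
    ((triR w1 w2).map g).toOuterMeasure E = ENNReal.ofReal (w1 * E.indicator 1 (g 0) +
      w2 * E.indicator 1 (g 1) + (1 - w1 - w2) * E.indicator 1 (g 2)) := by
  classical
  rw [PMF.toOuterMeasure_map_apply, PMF.toOuterMeasure_apply_fintype, Fin.sum_univ_three]
  simp only [Set.indicator_apply, Set.mem_preimage, triR_apply_zero w2 (by linarith : w1 ≤ 1),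
    triR_apply_one h1 h2 h12, triR_apply_two h1 h2 h12]
  have h3 : 0 ≤ 1 - w1 - w2 := by linarith
  split_ifs <;> simp [← ENNReal.ofReal_add, add_nonneg, h1, h2, h3]

end triR

section lawP

variable {w1 w2 : ℝ} (h1 : 0 ≤ w1) (h2 : 0 ≤ w2) (h12 : w1 + w2 ≤ 1)
include h1 h2 h12

theorem lawQ_eq_lawP_swap (m : ℕ) (θC θA : ℝ) :
    lawQ m θC θA w1 w2 = lawP m θC θA w2 w1 := by
  unfold lawQ lawP
  congr! 4 with c a
  refine PMF.toOuterMeasure_injective (MeasureTheory.OuterMeasure.ext fun E => ?_)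
  rw [toOuterMeasure_triR_map h1 h2 h12, toOuterMeasure_triR_map h2 h1 (by linarith)]
  simp only [Fin.isValue, Fin.reduceEq, if_true, if_false]
  ring_nf

theorem toReal_toOuterMeasure_lawP {m : ℕ} {θC θA : ℝ} (hC0 : 0 ≤ θC) (hC1 : θC ≤ 1)
    (hA0 : 0 ≤ θA) (hA1 : θA ≤ 1) (E : Set (ℕ × ℕ)) :
    ((lawP m θC θA w1 w2).toOuterMeasure E).toReal =
      binExp m θC fun c => binExp c θA fun a =>
        w1 * E.indicator 1 (a + 1, c - a) + w2 * E.indicator 1 (a, c - a + 1) +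
          (1 - w1 - w2) * E.indicator 1 (a, c - a) := by
  have h3 : 0 ≤ 1 - w1 - w2 := by linarith
  simp only [lawP, toReal_toOuterMeasure_binomN_bind hC0 hC1,
    toReal_toOuterMeasure_binomN_bind hA0 hA1, toOuterMeasure_triR_map h1 h2 h12]
  refine congrArg _ (funext fun c => congrArg _ (funext fun a => ?_))
  have hI (z : ℕ × ℕ) : 0 ≤ E.indicator (1 : ℕ × ℕ → ℝ) z :=
    Set.indicator_nonneg (fun _ _ => zero_le_one) z
  rw [ENNReal.toReal_ofReal (add_nonneg (add_nonneg (mul_nonneg h1 (hI _)) (mul_nonneg h2 (hI _)))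
    (mul_nonneg h3 (hI _)))]
  simp

theorem toReal_toOuterMeasure_lawP_sub_swap {m : ℕ} {θC θA : ℝ} (hC0 : 0 ≤ θC)
    (hC1 : θC ≤ 1) (hA0 : 0 ≤ θA) (hA1 : θA ≤ 1) (γ : ℝ) (E : Set (ℕ × ℕ)) :
    ((lawP m θC θA w1 w2).toOuterMeasure E).toReal -
        γ * ((lawP m θC θA w2 w1).toOuterMeasure E).toReal =
      binExp m θC fun c => binExp c θA fun a =>
        (w1 - γ * w2) * E.indicator 1 (a + 1, c - a) +
          (w2 - γ * w1) * E.indicator 1 (a, c - a + 1) +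
          (1 - γ) * (1 - w1 - w2) * E.indicator 1 (a, c - a) := by
  rw [toReal_toOuterMeasure_lawP h1 h2 h12 hC0 hC1 hA0 hA1,
    toReal_toOuterMeasure_lawP h2 h1 (by linarith) hC0 hC1 hA0 hA1]
  simp only [binExp_eq_sum, Finset.mul_sum, ← Finset.sum_sub_distrib]
  refine Finset.sum_congr rfl fun c _ => Finset.sum_congr rfl fun a _ => ?_
  ring

end lawP

theorem binExp_binExp_indicator_singleton (m : ℕ) (θC θA : ℝ) (i j : ℕ) :
    (binExp m θC fun c => binExp c θA fun a =>
        ({(i, j)} : Set (ℕ × ℕ)).indicator 1 (a, c - a)) =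
      binomWeight m θC (i + j) * binomWeight (i + j) θA i := by
  have inner (c : ℕ) :
      (binExp c θA fun a => ({(i, j)} : Set (ℕ × ℕ)).indicator 1 (a, c - a)) =
        if c = i + j then binomWeight (i + j) θA i else 0 := by
    rw [binExp_eq_sum]
    split_ifs with hc
    · subst hc
      rw [Finset.sum_eq_single_of_mem i (by simp)]
      · simp
      · intro a _ ha
        simp [ha]
    · refine Finset.sum_eq_zero fun a ha => ?_
      have : (a, c - a) ≠ (i, j) := by
        simp only [Finset.mem_range] at ha
        simp only [ne_eq, Prod.mk.injEq]
        omega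
      simp [this]
  simp only [inner, binExp_eq_sum, mul_ite, mul_zero, Finset.sum_ite_eq', Finset.mem_range]
  split_ifs with h
  · rfl
  · rw [binomWeight_eq_zero_of_lt (by omega), zero_mul]

section pointMass

variable (m : ℕ) (r : ℝ) (x y : ℕ)

theorem binExp_binExp_indicator_succ_fst :
    (binExp m (2 * r) fun c => binExp c (1 / 2) fun a =>
        ({(x, y)} : Set (ℕ × ℕ)).indicator 1 (a + 1, c - a)) * ((m + 1) * r) =
      x * trinomialWeight (m + 1) r x y := by
  rcases x with _ | i
  · simp [binExp_eq_sum]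
  · have hshift (a b : ℕ) :
        ({(i + 1, y)} : Set (ℕ × ℕ)).indicator (1 : ℕ × ℕ → ℝ) (a + 1, b) =
        ({(i, y)} : Set (ℕ × ℕ)).indicator 1 (a, b) := by
      simp [Set.indicator_apply]
    simp only [hshift, binExp_binExp_indicator_singleton, binomWeight_mul_binomWeight_half,
      trinomialWeight_mul_succ_left]
    push_cast
    ring

theorem binExp_binExp_indicator_succ_snd :
    (binExp m (2 * r) fun c => binExp c (1 / 2) fun a =>
        ({(x, y)} : Set (ℕ × ℕ)).indicator 1 (a, c - a + 1)) * ((m + 1) * r) =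
      y * trinomialWeight (m + 1) r x y := by
  rcases y with _ | j
  · simp [binExp_eq_sum]
  · have hshift (a b : ℕ) :
        ({(x, j + 1)} : Set (ℕ × ℕ)).indicator (1 : ℕ × ℕ → ℝ) (a, b + 1) =
        ({(x, j)} : Set (ℕ × ℕ)).indicator 1 (a, b) := by
      simp [Set.indicator_apply]
    simp only [hshift, binExp_binExp_indicator_singleton, binomWeight_mul_binomWeight_half,
      trinomialWeight_mul_succ_right]
    push_cast
    ring

theorem binExp_binExp_indicator_self :
    (binExp m (2 * r) fun c => binExp c (1 / 2) fun a =>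
        ({(x, y)} : Set (ℕ × ℕ)).indicator 1 (a, c - a)) * ((m + 1) * (1 - 2 * r)) =
      ((m + 1 : ℝ) - (x + y)) * trinomialWeight (m + 1) r x y := by
  rw [binExp_binExp_indicator_singleton, binomWeight_mul_binomWeight_half,
    trinomialWeight_mul_one_sub_two_mul]

end pointMass

theorem toReal_lawP_apply_mul {m : ℕ} {r w1 w2 : ℝ} (hr0 : 0 ≤ r) (hr1 : 2 * r ≤ 1)
    (h1 : 0 ≤ w1) (h2 : 0 ≤ w2) (h12 : w1 + w2 ≤ 1) (x y : ℕ) :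
    (lawP m (2 * r) (1 / 2) w1 w2 (x, y)).toReal * ((m + 1) * r * (1 - 2 * r)) =
      trinomialWeight (m + 1) r x y * (w1 * x * (1 - 2 * r) + w2 * y * (1 - 2 * r) +
        (1 - w1 - w2) * ((m + 1 : ℝ) - (x + y)) * r) := by
  rw [← PMF.toOuterMeasure_apply_singleton,
    toReal_toOuterMeasure_lawP h1 h2 h12 (by linarith) hr1 (by norm_num) (by norm_num)]
  simp only [binExp_add, binExp_const_mul]
  linear_combination (w1 * (1 - 2 * r)) * binExp_binExp_indicator_succ_fst m r x y +
    (w2 * (1 - 2 * r)) * binExp_binExp_indicator_succ_snd m r x y +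
    ((1 - w1 - w2) * r) * binExp_binExp_indicator_self m r x y

theorem toReal_lawP_sub_swap_apply {m : ℕ} {r w1 w2 : ℝ} (hr0 : 0 < r) (hr1 : 2 * r < 1)
    (h1 : 0 ≤ w1) (h2 : 0 ≤ w2) (h12 : w1 + w2 ≤ 1) (γ : ℝ) (x y : ℕ) :
    (lawP m (2 * r) (1 / 2) w1 w2 (x, y)).toReal -
        γ * (lawP m (2 * r) (1 / 2) w2 w1 (x, y)).toReal =
      trinomialWeight (m + 1) r x y / ((m + 1) * r * (1 - 2 * r)) *
        ((w1 - γ * w2) * x * (1 - 2 * r) + (w2 - γ * w1) * y * (1 - 2 * r) +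
          (1 - γ) * (1 - w1 - w2) * ((m + 1 : ℝ) - (x + y)) * r) := by
  have hK : 0 < (m + 1) * r * (1 - 2 * r) := by
    have : 0 < 1 - 2 * r := by linarith
    positivity
  rw [div_mul_eq_mul_div, eq_div_iff hK.ne']
  linear_combination toReal_lawP_apply_mul hr0.le hr1.le h1 h2 h12 x y -
    γ * toReal_lawP_apply_mul hr0.le hr1.le h2 h1 (by linarith) x y

theorem binExp_indicator_lower (c : ℕ) (θ A B C : ℝ) (L : ℝ → ℝ) :
    (binExp c θ fun a =>
        A * {z : ℕ × ℕ | 0 ≤ (z.1 : ℝ) - L (z.1 + z.2)}.indicator 1 (a + 1, c - a) +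
        B * {z : ℕ × ℕ | 0 ≤ (z.1 : ℝ) - L (z.1 + z.2)}.indicator 1 (a, c - a + 1) +
        C * {z : ℕ × ℕ | 0 ≤ (z.1 : ℝ) - L (z.1 + z.2)}.indicator 1 (a, c - a)) =
      A * binCDF c θ ⌈L (c + 1) - 1⌉ c + B * binCDF c θ ⌈L (c + 1)⌉ c +
        C * binCDF c θ ⌈L c⌉ c := by
  simp only [binCDF_ceil_eq_binExp, binExp_eq_sum, Finset.mul_sum, ← Finset.sum_add_distrib]
  refine Finset.sum_congr rfl fun a ha => ?_
  have hac : a ≤ c := Nat.lt_succ_iff.1 (Finset.mem_range.1 ha)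
  have hsub : ((c - a : ℕ) : ℝ) = c - a := Nat.cast_sub hac
  simp only [Set.indicator_apply, Set.mem_ofPred_eq, Pi.one_apply, hsub, Nat.cast_add, Nat.cast_one,
    sub_nonneg, sub_le_iff_le_add]
  ring_nf

theorem binExp_indicator_upper (c : ℕ) (θ A B C : ℝ) (H : ℝ → ℝ) :
    (binExp c θ fun a =>
        A * {z : ℕ × ℕ | 0 ≤ H (z.1 + z.2) - z.1}.indicator 1 (a + 1, c - a) +
        B * {z : ℕ × ℕ | 0 ≤ H (z.1 + z.2) - z.1}.indicator 1 (a, c - a + 1) +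
        C * {z : ℕ × ℕ | 0 ≤ H (z.1 + z.2) - z.1}.indicator 1 (a, c - a)) =
      A * binCDF c θ 0 ⌊H (c + 1) - 1⌋ + B * binCDF c θ 0 ⌊H (c + 1)⌋ +
        C * binCDF c θ 0 ⌊H c⌋ := by
  simp only [binCDF_floor_eq_binExp, binExp_eq_sum, Finset.mul_sum, ← Finset.sum_add_distrib]
  refine Finset.sum_congr rfl fun a ha => ?_
  have hac : a ≤ c := Nat.lt_succ_iff.1 (Finset.mem_range.1 ha)
  have hsub : ((c - a : ℕ) : ℝ) = c - a := Nat.cast_sub hac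
  simp only [Set.indicator_apply, Set.mem_ofPred_eq, Pi.one_apply, hsub, Nat.cast_add, Nat.cast_one,
    le_sub_iff_add_le]
  ring_nf

theorem hsDiv_lawP_swap_eq_of_lower {m : ℕ} {θ w1 w2 : ℝ} (h0 : 0 ≤ θ) (h1 : θ ≤ 1)
    (hw1 : 0 ≤ w1) (hw2 : 0 ≤ w2) (hw12 : w1 + w2 ≤ 1) (γ : ℝ) (L : ℝ → ℝ)
    (hL : ∀ x y : ℕ, ∃ κ ≥ 0, (lawP m θ (1 / 2) w1 w2 (x, y)).toReal -
      γ * (lawP m θ (1 / 2) w2 w1 (x, y)).toReal = κ * (x - L (x + y))) :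
    hsDiv (lawP m θ (1 / 2) w1 w2) (lawP m θ (1 / 2) w2 w1) γ =
      binExp m θ fun c =>
        (w1 - γ * w2) * binCDF c (1 / 2) ⌈L (c + 1) - 1⌉ c +
          (w2 - γ * w1) * binCDF c (1 / 2) ⌈L (c + 1)⌉ c +
          (1 - γ) * (1 - w1 - w2) * binCDF c (1 / 2) ⌈L c⌉ c := by
  rw [hsDiv_eq_of_sign _ _ γ (fun z => z.1 - L (z.1 + z.2)) fun z => hL z.1 z.2,
    toReal_toOuterMeasure_lawP_sub_swap hw1 hw2 hw12 h0 h1 (by norm_num) (by norm_num)]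
  simp only [binExp_indicator_lower]

theorem hsDiv_lawP_swap_eq_of_upper {m : ℕ} {θ w1 w2 : ℝ} (h0 : 0 ≤ θ) (h1 : θ ≤ 1)
    (hw1 : 0 ≤ w1) (hw2 : 0 ≤ w2) (hw12 : w1 + w2 ≤ 1) (γ : ℝ) (H : ℝ → ℝ)
    (hH : ∀ x y : ℕ, ∃ κ ≥ 0, (lawP m θ (1 / 2) w1 w2 (x, y)).toReal -
      γ * (lawP m θ (1 / 2) w2 w1 (x, y)).toReal = κ * (H (x + y) - x)) :
    hsDiv (lawP m θ (1 / 2) w1 w2) (lawP m θ (1 / 2) w2 w1) γ =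
      binExp m θ fun c =>
        (w1 - γ * w2) * binCDF c (1 / 2) 0 ⌊H (c + 1) - 1⌋ +
          (w2 - γ * w1) * binCDF c (1 / 2) 0 ⌊H (c + 1)⌋ +
          (1 - γ) * (1 - w1 - w2) * binCDF c (1 / 2) 0 ⌊H c⌋ := by
  rw [hsDiv_eq_of_sign _ _ γ (fun z => H (z.1 + z.2) - z.1) fun z => hH z.1 z.2,
    toReal_toOuterMeasure_lawP_sub_swap hw1 hw2 hw12 h0 h1 (by norm_num) (by norm_num)]
  simp only [binExp_indicator_upper]

section sign

variable {m : ℕ} {p α r : ℝ} (hp : 1 < p) (hα : 0 < α) (hpα : p * α + α ≤ 1)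
  (hr0 : 0 < r) (hr1 : 2 * r < 1) (ε : ℝ) (x y : ℕ)
include hp hα hpα hr0 hr1

theorem exists_toReal_lawP_sub_eq_mul_sub_lowf :
    ∃ κ ≥ 0, (lawP m (2 * r) (1 / 2) (p * α) α (x, y)).toReal -
      Real.exp ε * (lawP m (2 * r) (1 / 2) α (p * α) (x, y)).toReal =
        κ * (x - lowf (m + 1) p α r ε (x + y)) := by
  have h2r : 0 < 1 - 2 * r := by linarith
  have : 1 - 2 * r ≠ 0 := h2r.ne'
  refine ⟨trinomialWeight (m + 1) r x y / ((m + 1) * r * (1 - 2 * r)) *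
    ((1 - 2 * r) * α * (p - 1) * (1 + Real.exp ε)), ?_, ?_⟩
  · have := trinomialWeight_nonneg hr0.le hr1.le (m + 1) x y
    have : 0 < p - 1 := by linarith
    positivity
  · rw [toReal_lawP_sub_swap_apply hr0 hr1 (by positivity) hα.le hpα,
      mul_assoc (trinomialWeight (m + 1) r x y / _)]
    congr 1
    unfold lowf
    have : p - 1 ≠ 0 := by linarith
    have : Real.exp ε + 1 ≠ 0 := by positivity
    push_cast
    field_simp
    ring

theorem exists_toReal_lawP_sub_eq_mul_highf_sub :
    ∃ κ ≥ 0, (lawP m (2 * r) (1 / 2) α (p * α) (x, y)).toReal -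
      Real.exp ε * (lawP m (2 * r) (1 / 2) (p * α) α (x, y)).toReal =
        κ * (highf (m + 1) p α r ε (x + y) - x) := by
  have h2r : 0 < 1 - 2 * r := by linarith
  have : 1 - 2 * r ≠ 0 := h2r.ne'
  refine ⟨trinomialWeight (m + 1) r x y / ((m + 1) * r * (1 - 2 * r)) *
    ((1 - 2 * r) * α * (p - 1) * (1 + Real.exp ε)), ?_, ?_⟩
  · have := trinomialWeight_nonneg hr0.le hr1.le (m + 1) x y
    have : 0 < p - 1 := by linarith
    positivity
  · rw [toReal_lawP_sub_swap_apply hr0 hr1 hα.le (by positivity) (by linarith),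
      mul_assoc (trinomialWeight (m + 1) r x y / _)]
    congr 1
    unfold highf
    have : p - 1 ≠ 0 := by linarith
    have : (Real.exp ε)⁻¹ + 1 ≠ 0 := by positivity
    rw [Real.exp_neg]
    push_cast
    field_simp
    ring

end sign

theorem stmt7 (n : ℕ) (hn : 1 ≤ n) (p β q α r : ℝ) (hp : 1 < p) (hβ0 : 0 < β)
    (hβ : β ≤ (p - 1) / (p + 1)) (hq : 1 ≤ q) (hα : α = β / (p - 1)) (hr : r = p * α / q)
    (hr2 : r < 1 / 2) (ε : ℝ) :
    hsDiv (Pq n p β q) (Qq n p β q) (Real.exp ε) =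
      binExp (n - 1) (2 * r) (fun c =>
        (p - Real.exp ε) * α *
            binCDF c (1 / 2) (⌈lowf n p α r ε ((c : ℝ) + 1) - 1⌉ : ℝ) c
          + (1 - p * Real.exp ε) * α *
            binCDF c (1 / 2) (⌈lowf n p α r ε ((c : ℝ) + 1)⌉ : ℝ) c
          + (1 - Real.exp ε) * (1 - α - p * α) *
            binCDF c (1 / 2) (⌈lowf n p α r ε (c : ℝ)⌉ : ℝ) c) ∧
    hsDiv (Qq n p β q) (Pq n p β q) (Real.exp ε) =
      binExp (n - 1) (2 * r) (fun c =>
        (1 - p * Real.exp ε) * α *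
            binCDF c (1 / 2) 0 (⌊highf n p α r ε ((c : ℝ) + 1) - 1⌋ : ℝ)
          + (p - Real.exp ε) * α *
            binCDF c (1 / 2) 0 (⌊highf n p α r ε ((c : ℝ) + 1)⌋ : ℝ)
          + (1 - Real.exp ε) * (1 - α - p * α) *
            binCDF c (1 / 2) 0 (⌊highf n p α r ε (c : ℝ)⌋ : ℝ)) := by
  obtain ⟨m, rfl⟩ : ∃ m, n = m + 1 := ⟨n - 1, by omega⟩
  have hα0 : 0 < α := hα ▸ div_pos hβ0 (by linarith)
  have hpα : p * α + α ≤ 1 :=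
    calc p * α + α = β * (p + 1) / (p - 1) := by rw [hα]; ring
      _ ≤ 1 := (div_le_one (by linarith)).2 ((le_div_iff₀ (by linarith)).1 hβ)
  have hr0 : 0 < r := hr ▸ div_pos (mul_pos (by linarith) hα0) (by linarith)
  have hr1 : 2 * r < 1 := by linarith
  have hP : Pq (m + 1) p β q = lawP m (2 * r) (1 / 2) (p * α) α := by
    rw [Pq, ← hα, ← hr, Nat.add_sub_cancel]
  have hQ : Qq (m + 1) p β q = lawP m (2 * r) (1 / 2) α (p * α) := by
    rw [Qq, ← hα, ← hr, Nat.add_sub_cancel, lawQ_eq_lawP_swap (by positivity) hα0.le hpα]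
  rw [hP, hQ, Nat.add_sub_cancel]
  constructor
  · rw [hsDiv_lawP_swap_eq_of_lower (by linarith) hr1.le (by positivity) hα0.le hpα _ _
      (exists_toReal_lawP_sub_eq_mul_sub_lowf hp hα0 hpα hr0 hr1 ε)]
    congr 1
    funext c
    ring
  · rw [hsDiv_lawP_swap_eq_of_upper (by linarith) hr1.le hα0.le (by positivity) (by linarith) _ _
      (exists_toReal_lawP_sub_eq_mul_highf_sub hp hα0 hpα hr0 hr1 ε)]
    congr 1
    funext c
    ring

end
end
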